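/- arXiv:2507.15723 — 5 statements merged into one kernel-verified Lean document; each statement's English description precedes it below -/
import Mathlib

section
/- Let G be a finite abelian group, S ⊆ G \ {0} a symmetric set, H₁ an arbitrary finite graph, and H the standard subdivision of H₁ (each edge of H₁ replaced by a path of length 2). Then t(H, Cay(G,S)) ≥ t(K₂, Cay(G,S))^{e(H)} = (|S|/|G|)^{2·e(H₁)}. -/
/-!
A homomorphism from the subdivision of `H₁` is a map `F` on the branch vertices together with,
for each edge `uv`, a common neighbour of `F u` and `F v`. In `Cay(G,S)` there are
`r(F u - F v)` of these, where `r(d) = #{s ∈ S | s + d ∈ S}` has the nonnegative Fourier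
coefficients `|∑_{s ∈ S} ψ s|² / |G|`. Expanding each factor `r` in characters writes the
homomorphism count as a sum, over assignments `κ` of characters to edges, of nonnegative
weights times `∑_F ∏_e κ_e(F u - F v)`. This is the sum of a character of `G^V`, hence `|G|^|V|`
or `0`, so every term is nonnegative; the trivial assignment alone gives
`|G|^|V| (|S|²/|G|)^e(H₁)`.
-/
open Finset

/-- The Cayley graph of a finite abelian group `G` w.r.t. a symmetric set `S` avoiding `0`. -/
def cayley {G : Type*} [AddCommGroup G] (S : Finset G) (h0 : (0 : G) ∉ S)
    (hsymm : ∀ s ∈ S, -s ∈ S) : SimpleGraph G where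
  Adj x y := x - y ∈ S
  symm := by
    constructor
    intro x y h
    simpa [neg_sub] using hsymm _ h
  loopless := by
    constructor
    intro x h
    exact h0 (by simpa using h)

/-- The homomorphism density `t(H, Γ)`. -/
noncomputable def homDensity {α β : Type*} (H : SimpleGraph α) (Γ : SimpleGraph β) : ℝ :=
  (Nat.card {f : α → β // ∀ ⦃u v⦄, H.Adj u v → Γ.Adj (f u) (f v)} : ℝ) /
    (Nat.card β : ℝ) ^ (Nat.card α)

/-- The standard subdivision of a graph: replace each edge by a path of length 2. -/
def standardSubdivision {V : Type*} (H : SimpleGraph V) : SimpleGraph (V ⊕ H.edgeSet) where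
  Adj x y :=
    match x, y with
    | Sum.inl v, Sum.inr e => v ∈ (e : Sym2 V)
    | Sum.inr e, Sum.inl v => v ∈ (e : Sym2 V)
    | _, _ => False
  symm := by constructor; rintro (v | e) (w | f) h <;> simp_all
  loopless := by constructor; rintro (v | e) h <;> simp_all

namespace SimpleGraph

variable {V W : Type*} {H : SimpleGraph V} (Γ : SimpleGraph W) {a b : H.edgeSet → V}

lemma standardSubdivision_isHom_sumElim_iff (hab : ∀ e : H.edgeSet, (e : Sym2 V) = s(a e, b e))
    (F : V → W) (g : H.edgeSet → W) :
    (∀ ⦃x y⦄, (standardSubdivision H).Adj x y → Γ.Adj (Sum.elim F g x) (Sum.elim F g y)) ↔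
      ∀ e, g e ∈ Γ.commonNeighbors (F (a e)) (F (b e)) := by
  have hadj : ∀ v e, (standardSubdivision H).Adj (.inl v) (.inr e) ↔ v = a e ∨ v = b e :=
    fun v e ↦ (congrArg (v ∈ ·) (hab e)).to_iff.trans Sym2.mem_iff
  refine ⟨fun h e ↦ ⟨h ((hadj _ e).2 (.inl rfl)), h ((hadj _ e).2 (.inr rfl))⟩, fun h ↦ ?_⟩
  have hinl : ∀ v e, (standardSubdivision H).Adj (.inl v) (.inr e) → Γ.Adj (F v) (g e) := by
    rintro v e hve
    rcases (hadj v e).1 hve with rfl | rfl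
    exacts [(h e).1, (h e).2]
  rintro (v | e) (w | f) hxy
  · exact hxy.elim
  · exact hinl v f hxy
  · exact (hinl w e hxy.symm).symm
  · exact hxy.elim

def standardSubdivisionHomEquiv (hab : ∀ e : H.edgeSet, (e : Sym2 V) = s(a e, b e)) :
    {f : V ⊕ H.edgeSet → W // ∀ ⦃x y⦄, (standardSubdivision H).Adj x y → Γ.Adj (f x) (f y)} ≃
      Σ F : V → W, ∀ e, Γ.commonNeighbors (F (a e)) (F (b e)) :=
  ((Equiv.sumArrowEquivProdArrow V H.edgeSet W).subtypeEquiv fun f ↦ by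
      rw [← standardSubdivision_isHom_sumElim_iff Γ hab]; simp).trans <|
    (Equiv.subtypeProdEquivSigmaSubtype fun F g ↦
      ∀ e, g e ∈ Γ.commonNeighbors (F (a e)) (F (b e))).trans <|
    Equiv.sigmaCongrRight fun _ ↦ Equiv.subtypePiEquivPi

lemma natCard_hom_standardSubdivision [Fintype V] [DecidableEq V] [Fintype W]
    [Fintype H.edgeSet] (hab : ∀ e : H.edgeSet, (e : Sym2 V) = s(a e, b e)) :
    Nat.card {f : V ⊕ H.edgeSet → W //
        ∀ ⦃x y⦄, (standardSubdivision H).Adj x y → Γ.Adj (f x) (f y)} =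
      ∑ F : V → W, ∏ e, Nat.card (Γ.commonNeighbors (F (a e)) (F (b e))) := by
  rw [Nat.card_congr (standardSubdivisionHomEquiv Γ hab), Nat.card_sigma]
  simp_rw [Nat.card_pi]

end SimpleGraph

lemma natCard_commonNeighbors_cayley {G : Type*} [AddCommGroup G] [DecidableEq G] (S : Finset G)
    (h0 : (0 : G) ∉ S) (hsymm : ∀ s ∈ S, -s ∈ S) (x y : G) :
    Nat.card ((cayley S h0 hsymm).commonNeighbors x y) = #{s ∈ S | s + (x - y) ∈ S} := by
  rw [← Nat.card_eq_finsetCard]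
  refine Nat.card_congr ((Equiv.subLeft y).subtypeEquiv fun z ↦ ?_)
  simp [SimpleGraph.mem_commonNeighbors, cayley, and_comm]

open scoped ComplexOrder

namespace AddChar

variable {G V E : Type*} [AddCommGroup G] [Fintype G] [Fintype V] [DecidableEq V] [Fintype E]

lemma sum_prod_apply_sub_nonneg (a b : E → V) (κ : E → AddChar G ℂ) :
    0 ≤ ∑ F : V → G, ∏ e, κ e (F (a e) - F (b e)) := by
  let χ : AddChar (V → G) ℂ :=
    ∑ e, (κ e).compAddMonoidHom (Pi.evalAddMonoidHom (fun _ ↦ G) (a e) -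
      Pi.evalAddMonoidHom (fun _ ↦ G) (b e))
  have hχ : ∀ F, χ F = ∏ e, κ e (F (a e) - F (b e)) := fun F ↦ by simp [χ, sum_apply]
  simp_rw [← hχ, sum_eq_ite]
  split_ifs <;> positivity

lemma card_pow_mul_pow_le_sum_prod_apply_sub (a b : E → V) {r : G → ℂ}
    {c : AddChar G ℂ → ℂ} (hc : ∀ ψ, 0 ≤ c ψ) (hr : ∀ d, r d = ∑ ψ, c ψ * ψ d) :
    (Fintype.card G : ℂ) ^ Fintype.card V * c 0 ^ Fintype.card E ≤
      ∑ F : V → G, ∏ e, r (F (a e) - F (b e)) := by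
  classical
  calc (Fintype.card G : ℂ) ^ Fintype.card V * c 0 ^ Fintype.card E
      = (∏ e, c ((fun _ ↦ 0 : E → AddChar G ℂ) e)) *
          ∑ F : V → G, ∏ e, (fun _ ↦ 0 : E → AddChar G ℂ) e (F (a e) - F (b e)) := by
        simp [mul_comm]
    _ ≤ ∑ κ : E → AddChar G ℂ, (∏ e, c (κ e)) * ∑ F : V → G, ∏ e, κ e (F (a e) - F (b e)) :=
        single_le_sum (fun κ _ ↦ mul_nonneg (prod_nonneg fun e _ ↦ hc (κ e))
          (sum_prod_apply_sub_nonneg a b κ)) (mem_univ _)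
    _ = ∑ F : V → G, ∏ e, r (F (a e) - F (b e)) := by
        simp_rw [hr, prod_univ_sum, Fintype.piFinset_univ, mul_sum, ← prod_mul_distrib]
        exact sum_comm

lemma sum_normSq_sum_mul_apply [DecidableEq G] (S : Finset G) (d : G) :
    ∑ ψ : AddChar G ℂ, (Complex.normSq (∑ s ∈ S, ψ s) : ℂ) * ψ d =
      Fintype.card G * #{s ∈ S | s + d ∈ S} := by
  calc ∑ ψ : AddChar G ℂ, (Complex.normSq (∑ s ∈ S, ψ s) : ℂ) * ψ d
      = ∑ s ∈ S, ∑ t ∈ S, ∑ ψ : AddChar G ℂ, ψ (s - t + d) := by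
        simp_rw [← Complex.mul_conj, map_sum, ← map_neg_eq_conj, sum_mul_sum, sum_mul,
          map_add_eq_mul, sub_eq_add_neg, map_add_eq_mul]
        rw [sum_comm]
        refine sum_congr rfl fun s _ ↦ ?_
        rw [sum_comm]
    _ = ∑ s ∈ S, ∑ t ∈ S, if t = s + d then (Fintype.card G : ℂ) else 0 := by
        simp_rw [sum_apply_eq_ite]
        congr! 3 with s _ t _
        rw [sub_add_eq_add_sub, sub_eq_zero, eq_comm]
    _ = Fintype.card G * #{s ∈ S | s + d ∈ S} := by
        rw [sum_congr rfl fun s _ ↦ sum_ite_eq' S (s + d) _, ← sum_filter, sum_const, nsmul_eq_mul,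
          mul_comm]

end AddChar

theorem card_pow_mul_pow_le_sum_prod_card_filter_add_mem {G V E : Type*} [AddCommGroup G]
    [Fintype G] [DecidableEq G] [Fintype V] [DecidableEq V] [Fintype E] (S : Finset G)
    (a b : E → V) :
    (Fintype.card G : ℝ) ^ Fintype.card V * ((#S : ℝ) ^ 2 / Fintype.card G) ^ Fintype.card E ≤
      ∑ F : V → G, ∏ e, #{s ∈ S | s + (F (a e) - F (b e)) ∈ S} := by
  have hn : (0 : ℝ) < Fintype.card G := by exact_mod_cast Fintype.card_pos
  have := AddChar.card_pow_mul_pow_le_sum_prod_apply_sub (V := V) a b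
    (r := fun d ↦ (#{s ∈ S | s + d ∈ S} : ℂ))
    (c := fun ψ ↦ (Complex.normSq (∑ s ∈ S, ψ s) / Fintype.card G : ℝ))
    (fun ψ ↦ Complex.zero_le_real.2 (div_nonneg (Complex.normSq_nonneg _) hn.le)) fun d ↦ by
      simp only [Complex.ofReal_div, Complex.ofReal_natCast, div_mul_eq_mul_div, ← sum_div,
        AddChar.sum_normSq_sum_mul_apply]
      field_simp
  simp only [AddChar.zero_apply, sum_const, nsmul_eq_mul, mul_one, Complex.normSq_natCast,
    ← sq] at this
  exact_mod_cast this

/-- **Sidorenko's conjecture for standard subdivisions in abelian Cayley graphs.**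
If `G` is a finite abelian group, `S ⊆ G \ {0}` is symmetric, `H₁` is an arbitrary finite
graph and `H` is its standard subdivision, then
`t(H, Cay(G,S)) ≥ t(K₂, Cay(G,S))^{e(H)} = (|S|/|G|)^{2·e(H₁)}`. -/
theorem sidorenko_standard_subdivision_abelian_cayley
    {G V₁ : Type*} [AddCommGroup G] [Fintype G] [Fintype V₁]
    (S : Finset G) (h0 : (0 : G) ∉ S) (hsymm : ∀ s ∈ S, -s ∈ S)
    (H₁ : SimpleGraph V₁) :
    homDensity (standardSubdivision H₁) (cayley S h0 hsymm) ≥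
      ((S.card : ℝ) / (Fintype.card G : ℝ)) ^ (2 * Nat.card H₁.edgeSet) := by
  classical
  obtain ⟨a, b, hab⟩ : ∃ a b : H₁.edgeSet → V₁, ∀ e : H₁.edgeSet, (e : Sym2 V₁) = s(a e, b e) :=
    ⟨fun e ↦ e.1.out.1, fun e ↦ e.1.out.2, fun e ↦ (Quot.out_eq _).symm⟩
  rw [ge_iff_le, homDensity, SimpleGraph.natCard_hom_standardSubdivision _ hab, Nat.card_sum,
    Nat.card_eq_fintype_card, Nat.card_eq_fintype_card, Nat.card_eq_fintype_card,
    le_div_iff₀ (by positivity)]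
  simp_rw [natCard_commonNeighbors_cayley]
  refine le_of_eq_of_le ?_ (card_pow_mul_pow_le_sum_prod_card_filter_add_mem S a b)
  rw [pow_mul, pow_add, mul_left_comm, ← mul_pow]
  congr 2
  field_simp
end

section
/- Let G be a finite abelian group, let m ≤ k be positive integers, and let L be an m × k matrix with entries in {0, 1, −1} such that the induced group homomorphism G^k → G^m, x ↦ (Σ_{j=1}^k L_{ij} x_j)_{i=1}^m, is surjective. Then for every function f : G → ℂ, the average of f(x₁)⋯f(x_k) over all x = (x₁,…,x_k) in the kernel {x ∈ G^k : Σ_j L_{ij} x_j = 0 for all i} equals Σ_{(ξ₁,…,ξ_m) ∈ Ĝ^m} Π_{j=1}^k f̂(Σ_{i=1}^m L_{ij} ξ_i), where Ĝ is the character group of G and the integer-combination Σ_i L_{ij} ξ_i of characters is taken in Ĝ. -/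
open Finset

/-- Fourier coefficient of `f : G → ℂ` at the character `χ`. -/
noncomputable def fourCoeff {G : Type*} [AddCommGroup G] [Fintype G] (f : G → ℂ)
    (χ : AddChar G ℂ) : ℂ :=
  (∑ x : G, f x * (starRingEnd ℂ) (χ x)) / (Fintype.card G : ℂ)

/-!
Expanding each `fourCoeff f χⱼ` as an average over `G` turns the Fourier-side product into an
average over `y ∈ G^k` of `∏ⱼ f(yⱼ)` against `∏ⱼ conj ((Lᵀξ)ⱼ (yⱼ))`. Since `conj (χ y) = χ (-y)`
and `∏ⱼ (Lᵀξ)ⱼ (yⱼ) = ∏ᵢ ξᵢ ((Ly)ᵢ)`, summing over `ξ ∈ Ĝ^m` first is character orthogonality on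
`G^m`: it gives `|G|^m` when `Ly = 0` and `0` otherwise. So the Fourier side is
`|G|^m / |G|^k · ∑_{Ly = 0} ∏ⱼ f(yⱼ)`, and surjectivity of `L` makes all its fibres the same size,
so the kernel has exactly `|G|^k / |G|^m` elements.
-/

open Fintype ComplexConjugate

namespace AddChar

lemma map_sum_eq_prod {A M ι : Type*} [AddCommMonoid A] [CommMonoid M] (ψ : AddChar A M)
    (s : Finset ι) (a : ι → A) : ψ (∑ i ∈ s, a i) = ∏ i ∈ s, ψ (a i) := by
  induction s using Finset.cons_induction with
  | empty => simp
  | cons j s hj ih => rw [sum_cons, prod_cons, map_add_eq_mul, ih]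

end AddChar

def intMatrixHom {ι κ : Type*} [Fintype κ] (G : Type*) [AddCommGroup G] (L : ι → κ → ℤ) :
    (κ → G) →+ (ι → G) where
  toFun x i := ∑ j, L i j • x j
  map_zero' := by ext; simp
  map_add' x y := by ext; simp [smul_add, sum_add_distrib]

lemma intMatrixHom_apply {ι κ : Type*} [Fintype κ] {G : Type*} [AddCommGroup G]
    (L : ι → κ → ℤ) (x : κ → G) (i : ι) : intMatrixHom G L x i = ∑ j, L i j • x j := rfl

lemma AddMonoidHom.card_ker_mul_card_of_surjective {A B : Type*} [AddGroup A] [Fintype A]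
    [AddGroup B] [Fintype B] [DecidableEq B] (φ : A →+ B) (hφ : Function.Surjective φ) :
    #{a | φ a = 0} * card B = card A := by
  calc #{a | φ a = 0} * card B = ∑ b : B, #{a | φ a = b} := by
        rw [sum_congr rfl fun b _ => card_fiber_eq_of_mem_range φ (hφ b) (hφ 0), sum_const,
          card_univ, smul_eq_mul, mul_comm]
    _ = card A := (card_eq_sum_card_fiberwise fun a _ => mem_univ (φ a)).symm

section Fourier

variable {G ι κ : Type*} [AddCommGroup G] [Fintype ι] [Fintype κ]

lemma AddChar.prod_sum_zsmul_apply {M : Type*} [DivisionCommMonoid M]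
    (L : ι → κ → ℤ) (ξ : ι → AddChar G M) (y : κ → G) :
    ∏ j, (∑ i, L i j • ξ i) (y j) = ∏ i, ξ i (intMatrixHom G L y i) := by
  simp only [intMatrixHom_apply, sum_apply, zsmul_apply, map_sum_eq_prod,
    map_zsmul_eq_zpow]
  exact prod_comm

variable [Fintype G]

lemma AddChar.sum_pi_prod_apply_eq_ite [DecidableEq ι] [DecidableEq G] (y : ι → G) :
    ∑ ξ : ι → AddChar G ℂ, ∏ i, ξ i (y i) = if y = 0 then (card G : ℂ) ^ card ι else 0 := by
  rw [← Fintype.prod_sum fun i (χ : AddChar G ℂ) => χ (y i)]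
  simp only [sum_apply_eq_ite, Fintype.prod_ite_zero, prod_const, card_univ,
    funext_iff, Pi.zero_apply]

lemma prod_fourCoeff [DecidableEq κ] (f : G → ℂ) (χ : κ → AddChar G ℂ) :
    ∏ j, fourCoeff f (χ j) =
      (∑ y : κ → G, ∏ j, f (y j) * conj (χ j (y j))) / (card G : ℂ) ^ card κ := by
  simp only [fourCoeff, prod_div_distrib, Fintype.prod_sum, prod_const, card_univ]

lemma sum_prod_fourCoeff_transpose [DecidableEq ι] [DecidableEq κ] [DecidableEq G]
    (L : ι → κ → ℤ) (f : G → ℂ) :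
    ∑ ξ : ι → AddChar G ℂ, ∏ j, fourCoeff f (∑ i, L i j • ξ i) =
      (card G : ℂ) ^ card ι / (card G : ℂ) ^ card κ *
        ∑ y with intMatrixHom G L y = 0, ∏ j, f (y j) := by
  calc ∑ ξ : ι → AddChar G ℂ, ∏ j, fourCoeff f (∑ i, L i j • ξ i)
      = ∑ ξ : ι → AddChar G ℂ, (∑ y : κ → G,
          (∏ j, f (y j)) * ∏ i, ξ i (intMatrixHom G L (-y) i)) / (card G : ℂ) ^ card κ := by
        refine sum_congr rfl fun ξ _ => ?_
        simp only [prod_fourCoeff, prod_mul_distrib, ← AddChar.map_neg_eq_conj,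
          ← AddChar.prod_sum_zsmul_apply, Pi.neg_apply]
    _ = (∑ y : κ → G, (∏ j, f (y j)) *
          ∑ ξ : ι → AddChar G ℂ, ∏ i, ξ i (intMatrixHom G L (-y) i)) / (card G : ℂ) ^ card κ := by
        rw [← sum_div, sum_comm]
        simp only [mul_sum]
    _ = _ := by
        simp only [AddChar.sum_pi_prod_apply_eq_ite, map_neg, neg_eq_zero, mul_ite, mul_zero]
        rw [← sum_filter, ← sum_mul]
        ring

end Fourier

open scoped Classical in
theorem average_over_kernel_eq_fourier_sum_general
    {G : Type*} [AddCommGroup G] [Fintype G] {m k : ℕ}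
    (L : Fin m → Fin k → ℤ)
    (hsurj : Function.Surjective fun x : Fin k → G => fun i : Fin m => ∑ j, L i j • x j)
    (f : G → ℂ) :
    (∑ x ∈ Finset.univ.filter (fun x : Fin k → G => ∀ i, ∑ j, L i j • x j = 0),
        ∏ j, f (x j)) /
        ((Finset.univ.filter (fun x : Fin k → G => ∀ i, ∑ j, L i j • x j = 0)).card : ℂ) =
      ∑ ξ : Fin m → AddChar G ℂ, ∏ j, fourCoeff f (∑ i, L i j • ξ i) := by
  have hker : univ.filter (fun x : Fin k → G => ∀ i, ∑ j, L i j • x j = 0) =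
      univ.filter (fun x => intMatrixHom G L x = 0) :=
    filter_congr fun _ _ => funext_iff.symm
  have hcard : (#{x | intMatrixHom G L x = 0} : ℂ) * (card G : ℂ) ^ m = (card G : ℂ) ^ k := by
    have := (intMatrixHom G L).card_ker_mul_card_of_surjective hsurj
    rw [card_fun, card_fun, Fintype.card_fin, Fintype.card_fin] at this
    exact_mod_cast this
  have hG : (card G : ℂ) ≠ 0 := Nat.cast_ne_zero.2 card_ne_zero
  rw [sum_prod_fourCoeff_transpose, hker, Fintype.card_fin, Fintype.card_fin, ← hcard]
  field_simp

open scoped Classical in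
/-- Averaging `f(x₁)⋯f(x_k)` over the kernel of a `{0,1,-1}`-matrix `L` (whose induced
homomorphism `G^k → G^m` is surjective) equals the Fourier-side sum
`Σ_{ξ ∈ Ĝ^m} Π_j f̂(Σ_i L_{ij} ξ_i)`, where `Ĝ = AddChar G ℂ` is written additively. -/
theorem average_over_kernel_eq_fourier_sum
    {G : Type*} [AddCommGroup G] [Fintype G] {m k : ℕ} (hm : 0 < m) (hmk : m ≤ k)
    (L : Fin m → Fin k → ℤ) (hL : ∀ i j, L i j = 0 ∨ L i j = 1 ∨ L i j = -1)
    (hsurj : Function.Surjective fun x : Fin k → G => fun i : Fin m => ∑ j, L i j • x j)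
    (f : G → ℂ) :
    (∑ x ∈ Finset.univ.filter (fun x : Fin k → G => ∀ i, ∑ j, L i j • x j = 0),
        ∏ j, f (x j)) /
        ((Finset.univ.filter (fun x : Fin k → G => ∀ i, ∑ j, L i j • x j = 0)).card : ℂ) =
      ∑ ξ : Fin m → AddChar G ℂ, ∏ j, fourCoeff f (∑ i, L i j • ξ i) :=
  average_over_kernel_eq_fourier_sum_general L hsurj f
end

section
/- Let G be a finite abelian group, S ⊆ G \ {0} a symmetric set, and H a connected bipartite graph with bipartition V(H) = W ∪ U. Let M : G^{V(H)} → G^{E(H)} be the map (Mv)_e = v_i − v_j for each edge e = {i,j} with i ∈ W, j ∈ U. Then t(H, Cay(G,S)) equals the average, over all x in the image of M, of Π_{e ∈ E(H)} 1_S(x_e), where 1_S is the indicator function of S. -/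
/-! The labelling `v ↦ Mv` is a group homomorphism `G^V(H) → G^E(H)`, and since `H` is bipartite
with respect to `W`, `v` is a homomorphism `H → Cay(G,S)` exactly when every coordinate of `Mv`
lies in `S` (using `S = -S` for edges oriented from `Wᶜ` to `W`). So `hom(H, Cay(G,S))` is the
sum over `v` of `Π_e 1_S((Mv)_e)`. The fibres of a group homomorphism over its image are cosets of
its kernel, hence all of one size, so averaging over `G^V(H)` a function of `Mv` is the same as
averaging that function over the image of `M`. -/

open Finset

open scoped Classical in
/-- For a bipartition with parts `W` and `Wᶜ`, the signed difference `v i - v j` across an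
edge `{i, j}` with `i ∈ W`, `j ∉ W`. -/
noncomputable def edgeMap {G V : Type*} [AddCommGroup G] (W : Set V) (v : V → G) :
    Sym2 V → G :=
  Sym2.lift ⟨fun a b =>
      if a ∈ W ∧ b ∉ W then v a - v b else if b ∈ W ∧ a ∉ W then v b - v a else 0,
    by
      intro a b
      by_cases ha : a ∈ W <;> by_cases hb : b ∈ W <;> simp [ha, hb]⟩

theorem AddMonoidHom.sum_comp_eq_card_ker_smul {A B M : Type*} [AddGroup A] [Fintype A]
    [AddMonoid B] [DecidableEq B] [AddCommMonoid M] (f : A →+ B) (φ : B → M) :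
    ∑ a, φ (f a) = #{a | f a = 0} • ∑ b ∈ univ.image f, φ b := by
  rw [Finset.sum_comp, Finset.smul_sum]
  refine sum_congr rfl fun b hb => ?_
  obtain ⟨a, -, rfl⟩ := mem_image.mp hb
  rw [card_fiber_eq_of_mem_range f ⟨a, rfl⟩ ⟨0, map_zero f⟩]

theorem AddMonoidHom.sum_comp_div_card {A B K : Type*} [AddGroup A] [Fintype A]
    [AddMonoid B] [DecidableEq B] [Semifield K] [CharZero K] (f : A →+ B) (φ : B → K) :
    (∑ a, φ (f a)) / Fintype.card A = (∑ b ∈ univ.image f, φ b) / #(univ.image f) := by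
  have hcard : Fintype.card A = #{a | f a = 0} * #(univ.image f) := by
    simpa using f.sum_comp_eq_card_ker_smul fun _ => (1 : ℕ)
  have hker : (#{a | f a = 0} : K) ≠ 0 := by exact_mod_cast (card_pos.mpr ⟨0, by simp⟩).ne'
  rw [f.sum_comp_eq_card_ker_smul, hcard, nsmul_eq_mul]
  push_cast
  exact mul_div_mul_left _ _ hker

section edgeMap

variable {G V : Type*} [AddCommGroup G] (W : Set V)

lemma edgeMap_add (v w : V → G) (e : Sym2 V) :
    edgeMap W (v + w) e = edgeMap W v e + edgeMap W w e := by
  classical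
  induction e using Sym2.inductionOn with
  | hf a b =>
    simp only [edgeMap, Sym2.lift_mk, Pi.add_apply]
    split_ifs <;> abel

noncomputable def edgeMapHom (E : Set (Sym2 V)) : (V → G) →+ (E → G) :=
  AddMonoidHom.mk' (fun v e => edgeMap W v e) fun v w => funext fun e => edgeMap_add W v w e

lemma coe_edgeMapHom (E : Set (Sym2 V)) :
    ⇑(edgeMapHom (G := G) W E) = fun v (e : E) => edgeMap W v e :=
  rfl

open scoped Classical in
lemma edgeMap_of_adj {H : SimpleGraph V} (hbip : ∀ ⦃a b : V⦄, H.Adj a b → (a ∈ W ↔ b ∉ W))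
    (v : V → G) {a b : V} (h : H.Adj a b) :
    edgeMap W v s(a, b) = if a ∈ W then v a - v b else v b - v a := by
  by_cases ha : a ∈ W
  · simp [edgeMap, ha, (hbip h).mp ha]
  · simp [edgeMap, ha, not_not.mp (mt (hbip h).mpr ha)]

end edgeMap

section cayley

variable {G V : Type*} [AddCommGroup G] (W : Set V) {S : Finset G} (h0 : (0 : G) ∉ S)
  (hsymm : ∀ s ∈ S, -s ∈ S) {H : SimpleGraph V}

open scoped Classical in
lemma forall_adj_cayley_iff_forall_edgeMap_mem
    (hbip : ∀ ⦃a b : V⦄, H.Adj a b → (a ∈ W ↔ b ∉ W)) (v : V → G) :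
    (∀ ⦃a b : V⦄, H.Adj a b → (cayley S h0 hsymm).Adj (v a) (v b)) ↔
      ∀ e : H.edgeSet, edgeMap W v e ∈ S := by
  constructor
  · rintro hv ⟨e, he⟩
    induction e using Sym2.inductionOn with
    | hf a b =>
      change edgeMap W v s(a, b) ∈ S
      rw [edgeMap_of_adj W hbip v he]
      split_ifs
      · exact hv he
      · exact hv he.symm
  · intro hv a b hab
    have hab' : edgeMap W v s(a, b) ∈ S := hv ⟨s(a, b), hab⟩
    rw [edgeMap_of_adj W hbip v hab] at hab'
    split_ifs at hab'
    · exact hab'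
    · exact (show (cayley S h0 hsymm).Adj (v b) (v a) from hab').symm

open scoped Classical in
lemma card_hom_cayley_eq_sum_prod_indicator [Fintype G] [Fintype V]
    (hbip : ∀ ⦃a b : V⦄, H.Adj a b → (a ∈ W ↔ b ∉ W)) :
    (Nat.card {f : V → G // ∀ ⦃a b⦄, H.Adj a b → (cayley S h0 hsymm).Adj (f a) (f b)} : ℝ) =
      ∑ v, ∏ e : H.edgeSet, if edgeMap W v e ∈ S then 1 else 0 := by
  rw [Nat.card_eq_fintype_card, Fintype.card_subtype, ← sum_boole]
  refine sum_congr rfl fun v _ => ?_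
  simp only [prod_boole, mem_univ, forall_const,
    forall_adj_cayley_iff_forall_edgeMap_mem W h0 hsymm hbip v]

end cayley

open scoped Classical in
theorem homDensity_eq_average_over_image_general
    {G V : Type*} [AddCommGroup G] [Fintype G] [Fintype V]
    (S : Finset G) (h0 : (0 : G) ∉ S) (hsymm : ∀ s ∈ S, -s ∈ S)
    (H : SimpleGraph V)
    (W : Set V) (hbip : ∀ ⦃a b : V⦄, H.Adj a b → (a ∈ W ↔ b ∉ W)) :
    homDensity H (cayley S h0 hsymm) =
      (∑ x ∈ Finset.univ.image (fun (v : V → G) (e : H.edgeSet) => edgeMap W v (e : Sym2 V)),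
          ∏ e : H.edgeSet, (if x e ∈ S then (1 : ℝ) else 0)) /
        ((Finset.univ.image
            (fun (v : V → G) (e : H.edgeSet) => edgeMap W v (e : Sym2 V))).card : ℝ) := by
  rw [homDensity, card_hom_cayley_eq_sum_prod_indicator W h0 hsymm hbip, Nat.card_eq_fintype_card,
    Nat.card_eq_fintype_card, ← Nat.cast_pow, ← Fintype.card_fun]
  have averaging := (edgeMapHom (G := G) W H.edgeSet).sum_comp_div_card
    fun x => ∏ e, if x e ∈ S then (1 : ℝ) else 0
  rwa [coe_edgeMapHom] at averaging

open scoped Classical in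
/-- For a connected bipartite graph `H` with bipartition `W ∪ Wᶜ` and the map
`M : G^{V(H)} → G^{E(H)}`, `(Mv)_{{i,j}} = v_i - v_j` (`i ∈ W`, `j ∉ W`), the homomorphism
density `t(H, Cay(G,S))` equals the average over the image of `M` of `Π_e 1_S(x_e)`. -/
theorem homDensity_eq_average_over_image
    {G V : Type*} [AddCommGroup G] [Fintype G] [Fintype V]
    (S : Finset G) (h0 : (0 : G) ∉ S) (hsymm : ∀ s ∈ S, -s ∈ S)
    (H : SimpleGraph V) (hconn : H.Connected)
    (W : Set V) (hbip : ∀ ⦃a b : V⦄, H.Adj a b → (a ∈ W ↔ b ∉ W)) :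
    homDensity H (cayley S h0 hsymm) =
      (∑ x ∈ Finset.univ.image (fun (v : V → G) (e : H.edgeSet) => edgeMap W v (e : Sym2 V)),
          ∏ e : H.edgeSet, (if x e ∈ S then (1 : ℝ) else 0)) /
        ((Finset.univ.image
            (fun (v : V → G) (e : H.edgeSet) => edgeMap W v (e : Sym2 V))).card : ℝ) :=
  homDensity_eq_average_over_image_general S h0 hsymm H W hbip
end

section
/- Let G be a finite abelian group, let H be a connected bipartite graph on n vertices and k edges with bipartition V(H) = W ∪ U, let T be a spanning tree of H with chords e₁,…,e_m (m = k − n + 1) and fundamental cycles C_{e₁},…,C_{e_m}, and for each i fix a proper 2-edge-colouring σ_i : C_{e_i} → {+1,−1} (adjacent edges of the cycle get opposite signs; such a colouring exists since every cycle of a bipartite graph is even). Let L be the m × k matrix with L_{ij} = σ_i(j) if edge j lies on C_{e_i} and L_{ij} = 0 otherwise, and let M : G^{V(H)} → G^{E(H)} be the map (Mv)_{{i,j}} = v_i − v_j (i ∈ W, j ∈ U). Then the image of M equals {x ∈ G^{E(H)} : Σ_{j∈E(H)} L_{ij} x_j = 0 for every i ∈ [m]}, i.e. Im(M) = ker(L).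 -/
open Finset

/-!
Along a closed walk in a bipartite graph, the proper signing `L e` of the edges and the sign
`±1` of the side of `W` on which each dart starts both alternate, so their product is a constant
`ε`; hence `∑ L e (Mv)_e` telescopes to `ε (v b - v b) = 0`, and `Im M ⊆ ker L`.
Conversely, for `x ∈ ker L` integrate `x` along the paths of the spanning tree from a root to get
`v` with `Mv = x` on `T`. Then `Mv - x ∈ ker L` vanishes on `T`, and the row of the chord `eᵢ`
meets no other edge outside `T`; since `L i eᵢ = ±1`, `Mv - x` vanishes on `eᵢ` as well.
-/

namespace SimpleGraph

variable {V : Type*} {T : SimpleGraph V}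

theorem IsAcyclic.concat_eq_or_concat_eq (hT : T.IsAcyclic) {r x y : V} {p : T.Walk r x}
    {q : T.Walk r y} (hp : p.IsPath) (hq : q.IsPath) (h : T.Adj x y) :
    p.concat h = q ∨ q.concat h.symm = p := by
  classical
  have unique {a b : V} (p q : T.Path a b) : (p : T.Walk a b) = q :=
    congrArg Subtype.val ((hT.subsingleton_path a b).elim p q)
  by_cases hy : y ∈ p.support
  · right
    have htake : p.takeUntil y hy = q := unique ⟨_, hp.takeUntil hy⟩ ⟨q, hq⟩
    have hdrop : p.dropUntil y hy = .cons h.symm .nil :=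
      unique ⟨_, hp.dropUntil hy⟩ (Path.singleton h.symm)
    rw [← p.take_spec hy, htake, hdrop, Walk.concat_eq_append]
  · exact .inl (unique ⟨_, hp.concat hy h⟩ ⟨q, hq⟩)

theorem IsTree.exists_potential {G : Type*} [AddCommGroup G] (hT : T.IsTree)
    (δ : T.Dart → G) (hδ : ∀ d, δ d.symm = -δ d) :
    ∃ v : V → G, ∀ d : T.Dart, v d.snd - v d.fst = δ d := by
  obtain ⟨r⟩ := hT.connected.nonempty
  choose P hP _ using hT.existsUnique_path r
  refine ⟨fun u => ((P u).darts.map δ).sum, fun ⟨⟨x, y⟩, h⟩ => ?_⟩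
  rcases hT.isAcyclic.concat_eq_or_concat_eq (hP x) (hP y) h with hxy | hyx
  · simp [← hxy, Walk.darts_concat]
  · simp [← hyx, Walk.darts_concat, ← hδ, Dart.symm_mk]

theorem sum_edgeSet_eq_sum_edges {M : Type*} [AddCommMonoid M] {H : SimpleGraph V}
    [Fintype H.edgeSet] {a b : V} (p : H.Walk a b) (hp : p.edges.Nodup) {f : Sym2 V → M}
    (hf : ∀ e ∉ p.edges, f e = 0) : ∑ e : H.edgeSet, f e = (p.edges.map f).sum := by
  classical
  rw [Finset.sum_set_coe, ← List.sum_toFinset f hp]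
  refine (Finset.sum_subset (fun e he => ?_) fun e _ he => hf e (by simpa using he)).symm
  simpa using p.edges_subset_edgeSet (List.mem_toFinset.mp he)

end SimpleGraph

theorem List.isChain_of_forall_get_get_mod {α : Type*} {R : α → α → Prop} {l : List α}
    (h : ∀ t : Fin l.length, R (l.get t) (l.get ⟨(t + 1) % l.length, Nat.mod_lt _ t.pos⟩)) :
    l.IsChain R :=
  List.isChain_iff_getElem.mpr fun i hi => by
    simpa [Nat.mod_eq_of_lt hi] using h ⟨i, by omega⟩

theorem eq_zero_of_sum_smul_eq_zero {ι G : Type*} [Fintype ι] [AddCommGroup G] {L : ι → ℤ}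
    {y : ι → G} {j : ι} (hsum : ∑ i, L i • y i = 0) (hj : IsUnit (L j))
    (hy : ∀ i ≠ j, L i • y i = 0) : y j = 0 := by
  rwa [Finset.sum_eq_single j (fun i _ hi => hy i hi) (by simp), hj.smul_eq_zero] at hsum

open scoped Classical in
noncomputable def sideSign {V : Type*} (W : Set V) (a : V) : ℤ := if a ∈ W then 1 else -1

section Bipartite

variable {G V : Type*} [AddCommGroup G] {W : Set V} {a b : V}

theorem sideSign_mul_self : sideSign W a * sideSign W a = 1 := by
  unfold sideSign; split_ifs <;> rfl

theorem sideSign_eq_neg (hab : a ∈ W ↔ b ∉ W) : sideSign W b = -sideSign W a := by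
  by_cases ha : a ∈ W <;> simp [sideSign, ha, hab.mp, mt hab.mpr]

theorem edgeMap_mk (v : V → G) (hab : a ∈ W ↔ b ∉ W) :
    edgeMap W v s(a, b) = sideSign W a • (v a - v b) := by
  by_cases ha : a ∈ W
  · simp [edgeMap, sideSign, ha, hab.mp ha]
  · simp [edgeMap, sideSign, ha, not_not.mp (mt hab.mpr ha)]

theorem SimpleGraph.IsTree.exists_edgeMap_eq {T : SimpleGraph V} (hT : T.IsTree)
    (hbip : ∀ ⦃a b : V⦄, T.Adj a b → (a ∈ W ↔ b ∉ W)) (X : Sym2 V → G) :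
    ∃ v : V → G, ∀ e ∈ T.edgeSet, edgeMap W v e = X e := by
  obtain ⟨v, hv⟩ := hT.exists_potential (fun d => -(sideSign W d.fst • X d.edge)) fun d => by
    rw [SimpleGraph.Dart.edge_symm, show d.symm.fst = d.snd from rfl,
      sideSign_eq_neg (hbip d.adj), neg_smul]
  refine ⟨v, Sym2.ind fun x y hxy => ?_⟩
  have hvxy : v y - v x = -(sideSign W x • X s(x, y)) := hv ⟨(x, y), hxy⟩
  rw [edgeMap_mk v (hbip hxy), ← neg_sub, hvxy, neg_neg, smul_smul, sideSign_mul_self, one_smul]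

variable {H : SimpleGraph V}

theorem sum_edges_smul_edgeMap (hbip : ∀ ⦃a b : V⦄, H.Adj a b → (a ∈ W ↔ b ∉ W))
    (p : H.Walk a b) {L : Sym2 V → ℤ}
    (hL : p.edges.IsChain fun e f => L e = -L f) (v : V → G) {ε : ℤ}
    (hε : ∀ e ∈ p.edges.head?, L e * sideSign W a = ε) :
    (p.edges.map fun e => L e • edgeMap W v e).sum = ε • (v a - v b) := by
  induction p with
  | nil => simp
  | @cons a x b h p ih =>
    rw [SimpleGraph.Walk.edges_cons, List.isChain_cons] at hL
    have hε' : L s(a, x) * sideSign W a = ε := hε _ rfl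
    have ihε : ∀ f ∈ p.edges.head?, L f * sideSign W x = ε := fun f hf => by
      rw [← hε', hL.1 f hf, sideSign_eq_neg (hbip h)]; ring
    rw [SimpleGraph.Walk.edges_cons, List.map_cons, List.sum_cons, ih hL.2 ihε,
      edgeMap_mk v (hbip h), smul_smul, hε', ← smul_add, sub_add_sub_cancel]

theorem sum_edges_smul_edgeMap_eq_zero
    (hbip : ∀ ⦃a b : V⦄, H.Adj a b → (a ∈ W ↔ b ∉ W))
    (p : H.Walk a a) {L : Sym2 V → ℤ}
    (hL : p.edges.IsChain fun e f => L e = -L f) (v : V → G) :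
    (p.edges.map fun e => L e • edgeMap W v e).sum = 0 := by
  obtain ⟨ε, hε⟩ : ∃ ε : ℤ, ∀ e ∈ p.edges.head?, L e * sideSign W a = ε := by
    cases p.edges.head? with
    | none => exact ⟨0, by simp⟩
    | some e =>
      exact ⟨L e * sideSign W a, fun f hf => by obtain rfl := Option.mem_some_iff.mp hf; rfl⟩
  rw [sum_edges_smul_edgeMap hbip p hL v hε, sub_self, smul_zero]

theorem sum_edgeSet_smul_edgeMap_eq_zero [Fintype H.edgeSet]
    (hbip : ∀ ⦃a b : V⦄, H.Adj a b → (a ∈ W ↔ b ∉ W))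
    (p : H.Walk a a) (hp : p.IsTrail)
    {L : Sym2 V → ℤ} (hLsupp : ∀ e, L e ≠ 0 → e ∈ p.edges)
    (hL : p.edges.IsChain fun e f => L e = -L f) (v : V → G) :
    ∑ e : H.edgeSet, L e • edgeMap W v e = 0 := by
  rw [SimpleGraph.sum_edgeSet_eq_sum_edges (f := fun e => L e • edgeMap W v e) p hp.edges_nodup
      fun e he => ?_,
    sum_edges_smul_edgeMap_eq_zero hbip p hL v]
  rw [not_imp_comm.mp (hLsupp e) he, zero_smul]

end Bipartite

open scoped Classical in
theorem range_edgeMap_eq_kernel_circuitMatrix_general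
    {G V : Type*} [AddCommGroup G] [Fintype V]
    (H : SimpleGraph V)
    (W : Set V) (hbip : ∀ ⦃a b : V⦄, H.Adj a b → (a ∈ W ↔ b ∉ W))
    -- the spanning tree
    (T : Set (Sym2 V)) (hTsub : T ⊆ H.edgeSet)
    (hTtree : (SimpleGraph.fromEdgeSet T).IsTree)
    -- the chords `e₁, …, e_m`
    {m : ℕ} (c : Fin m ≃ ↥(H.edgeSet \ T))
    -- the fundamental cycles `C_{e₁}, …, C_{e_m}`
    (b : Fin m → V) (C : ∀ i : Fin m, H.Walk (b i) (b i))
    (hCcyc : ∀ i, (C i).IsCycle)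
    (hCsub : ∀ i, ∀ e ∈ (C i).edges, e = ((c i) : Sym2 V) ∨ e ∈ T)
    (hCchord : ∀ i, ((c i) : Sym2 V) ∈ (C i).edges)
    -- the circuit matrix `L`
    (L : Fin m → Sym2 V → ℤ)
    (hLval : ∀ i e, L i e = 0 ∨ L i e = 1 ∨ L i e = -1)
    (hLsupp : ∀ i e, L i e ≠ 0 ↔ e ∈ (C i).edges)
    (hLproper : ∀ i (t : Fin (C i).edges.length),
      L i ((C i).edges.get t) =
        - L i ((C i).edges.get ⟨(t.val + 1) % (C i).edges.length, Nat.mod_lt _ t.pos⟩)) :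
    Set.range (fun (v : V → G) (e : H.edgeSet) => edgeMap W v (e : Sym2 V)) =
      {x : H.edgeSet → G | ∀ i : Fin m, ∑ e : H.edgeSet, L i (e : Sym2 V) • x e = 0} := by
  have hrow i (v : V → G) : ∑ e : H.edgeSet, L i e • edgeMap W v e = 0 :=
    sum_edgeSet_smul_edgeMap_eq_zero hbip (C i) (hCcyc i).isTrail (fun e => (hLsupp i e).mp)
      (List.isChain_of_forall_get_get_mod (hLproper i)) v
  ext x
  refine ⟨fun ⟨v, hv⟩ i => hv ▸ hrow i v, fun hx => ?_⟩
  obtain ⟨v, hv⟩ := hTtree.exists_edgeMap_eq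
    (fun a b hab => hbip (hTsub ((SimpleGraph.fromEdgeSet_adj T).mp hab).1))
    (fun e => if he : e ∈ H.edgeSet then x ⟨e, he⟩ else 0)
  have hvT (e : H.edgeSet) (heT : (e : Sym2 V) ∈ T) : edgeMap W v e = x e := by
    simpa using hv e (by simpa [SimpleGraph.edgeSet_fromEdgeSet] using
      ⟨heT, H.not_isDiag_of_mem_edgeSet e.2⟩)
  refine ⟨v, funext fun e => ?_⟩
  by_cases heT : (e : Sym2 V) ∈ T
  · exact hvT e heT
  obtain ⟨i, hi⟩ : ∃ i, (c i : Sym2 V) = e := ⟨c.symm ⟨e, e.2, heT⟩, by simp⟩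
  refine sub_eq_zero.mp (eq_zero_of_sum_smul_eq_zero (L := fun f : H.edgeSet => L i f)
    (y := fun f => edgeMap W v f - x f) ?_ ?_ fun f hf => ?_)
  · simp only [smul_sub, Finset.sum_sub_distrib, hrow i v, hx i, sub_zero]
  · exact Int.isUnit_iff.mpr ((hLval i e).resolve_left ((hLsupp i e).mpr (hi ▸ hCchord i)))
  · by_cases hz : L i f = 0
    · simp [hz]
    rcases hCsub i f ((hLsupp i f).mp hz) with hfc | hfT
    · exact absurd (Subtype.ext (hfc.trans hi)) hf
    · simp [hvT f hfT]

open scoped Classical in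
/-- **Im(M) = ker(L) for the circuit matrix.**  Let `H` be a connected bipartite graph with
bipartition `W ∪ Wᶜ`, `T` a spanning tree, `c` an enumeration of the chords, `C i` the
fundamental cycle of the `i`-th chord (given as a closed walk), and let `L` be a circuit
matrix: `L i` is supported exactly on the edges of `C i`, takes values in `{0,1,-1}`, and
assigns opposite signs to consecutive edges of the cycle (a proper `2`-edge-colouring).
Then the image of `M : G^{V(H)} → G^{E(H)}`, `(Mv)_{{i,j}} = v_i - v_j`, equals the kernel
of `L` acting on `G^{E(H)}`. -/
theorem range_edgeMap_eq_kernel_circuitMatrix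
    {G V : Type*} [AddCommGroup G] [Fintype G] [Fintype V]
    (H : SimpleGraph V) (hconn : H.Connected)
    (W : Set V) (hbip : ∀ ⦃a b : V⦄, H.Adj a b → (a ∈ W ↔ b ∉ W))
    -- the spanning tree
    (T : Set (Sym2 V)) (hTsub : T ⊆ H.edgeSet)
    (hTtree : (SimpleGraph.fromEdgeSet T).IsTree)
    -- the chords `e₁, …, e_m`
    {m : ℕ} (c : Fin m ≃ ↥(H.edgeSet \ T))
    -- the fundamental cycles `C_{e₁}, …, C_{e_m}`
    (b : Fin m → V) (C : ∀ i : Fin m, H.Walk (b i) (b i))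
    (hCcyc : ∀ i, (C i).IsCycle)
    (hCsub : ∀ i, ∀ e ∈ (C i).edges, e = ((c i) : Sym2 V) ∨ e ∈ T)
    (hCchord : ∀ i, ((c i) : Sym2 V) ∈ (C i).edges)
    -- the circuit matrix `L`
    (L : Fin m → Sym2 V → ℤ)
    (hLval : ∀ i e, L i e = 0 ∨ L i e = 1 ∨ L i e = -1)
    (hLsupp : ∀ i e, L i e ≠ 0 ↔ e ∈ (C i).edges)
    (hLproper : ∀ i (t : Fin (C i).edges.length),
      L i ((C i).edges.get t) =
        - L i ((C i).edges.get ⟨(t.val + 1) % (C i).edges.length, Nat.mod_lt _ t.pos⟩)) :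
    Set.range (fun (v : V → G) (e : H.edgeSet) => edgeMap W v (e : Sym2 V)) =
      {x : H.edgeSet → G | ∀ i : Fin m, ∑ e : H.edgeSet, L i (e : Sym2 V) • x e = 0} :=
  range_edgeMap_eq_kernel_circuitMatrix_general H W hbip T hTsub hTtree c b C hCcyc hCsub hCchord L
    hLval hLsupp hLproper
end

section
/- Let G be a finite abelian group, S ⊆ G \ {0} a symmetric set with S ≠ ∅, let H₁ be a connected graph containing at least one cycle (i.e. e(H₁) ≥ v(H₁)), and let H be the standard subdivision of H₁. Let f = 1_S be the indicator function of S. If there exist ε ∈ (0,1] and a nontrivial character χ of G with |f̂(χ)| ≥ ε·f̂(0), then t(H, Cay(G,S)) ≥ t(K₂, Cay(G,S))^{e(H)} · (1 + ε^{e(H)}). -/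
open Finset

/-!
Orient every edge `e` of `H₁` as `uₑ → vₑ`. A homomorphism from the subdivision to `Cay(G,S)` is
a map `f : V₁ → G` together with a common neighbour of `f uₑ` and `f vₑ` for every edge, and there
are `#{x ∈ S | x + (f uₑ - f vₑ) ∈ S}` of those; `|G|` times this count is
`∑ ψ, |∑_{x ∈ S} ψ x|² ψ (f uₑ - f vₑ)`. Multiplying out over the edges and summing over `f`,
orthogonality of characters leaves `t(H, Cay(G,S)) = ∑_w ∏ₑ |f̂(wₑ)|²`, summed over the labellings
`w` of the edges by characters for which `f ↦ ∏ₑ wₑ (f uₑ - f vₑ)` is trivial. All terms are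
nonnegative. The labelling `w ≡ 1` contributes `t(K₂)^{e(H)}`; if the orientation runs along a
cycle of `H₁`, labelling the cycle edges by `χ` and the others by `1` also gives a trivial
character, and its term is at least `(ε t(K₂))^{e(H)}`.
-/

open scoped Classical

namespace SimpleGraph

variable {V : Type*} {H : SimpleGraph V}

lemma Connected.not_isAcyclic_of_card_le [Finite V] (hH : H.Connected)
    (hcard : Nat.card V ≤ Nat.card H.edgeSet) : ¬ H.IsAcyclic := fun hacyc => by
  have := (isTree_iff_connected_and_card.mp ⟨hH, hacyc⟩).2
  omega

lemma Walk.prod_darts_map_addChar {A M : Type*} [AddGroup A] [Monoid M] (ψ : AddChar A M)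
    (f : V → A) {u v : V} (p : H.Walk u v) :
    (p.darts.map fun d => ψ (f d.fst - f d.snd)).prod = ψ (f u - f v) := by
  induction p with
  | nil => simp
  | cons h q ih => simp [ih, ← AddChar.map_add_eq_mul]

lemma Walk.exists_orientation_of_edges_nodup {u v : V} (p : H.Walk u v) (hp : p.edges.Nodup) :
    ∃ o : H.edgeSet → H.Dart,
      (∀ e, (o e).edge = e) ∧ ∀ d ∈ p.darts, o ⟨d.edge, d.edge_mem⟩ = d := by
  have hdart : ∀ e : H.edgeSet,
      ∃ d : H.Dart, d.edge = e ∧ ∀ d' ∈ p.darts, d'.edge = e → d' = d := by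
    rintro ⟨e, he⟩
    by_cases h : ∃ d ∈ p.darts, d.edge = e
    · obtain ⟨d, hd, rfl⟩ := h
      exact ⟨d, rfl, fun d' hd' h => List.inj_on_of_nodup_map hp hd' hd h⟩
    · induction e using Sym2.ind with
      | h a b => exact ⟨⟨(a, b), he⟩, rfl, fun d' hd' h' => (h ⟨d', hd', h'⟩).elim⟩
  choose o ho using hdart
  exact ⟨o, fun e => (ho e).1, fun d hd => ((ho _).2 d hd rfl).symm⟩

lemma card_edgeSet_standardSubdivision [Finite V] (H : SimpleGraph V) :
    Nat.card (standardSubdivision H).edgeSet = 2 * Nat.card H.edgeSet := by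
  have := Fintype.ofFinite V
  let φ : H.Dart → (standardSubdivision H).edgeSet := fun d =>
    ⟨s(.inl d.fst, .inr ⟨d.edge, d.edge_mem⟩), Sym2.mem_mk_left _ _⟩
  have hφ : Function.Bijective φ := by
    constructor
    · intro d d' h
      obtain ⟨hfst, hedge⟩ : d.fst = d'.fst ∧ d.edge = d'.edge := by
        simpa [φ] using congrArg Subtype.val h
      rcases (dart_edge_eq_iff d d').mp hedge with rfl | rfl
      · rfl
      · exact (d'.adj.ne hfst.symm).elim
    · have hinc {v : V} {e : H.edgeSet} (hv : v ∈ (e : Sym2 V)) :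
          ∃ d, (φ d : Sym2 (V ⊕ H.edgeSet)) = s(.inl v, .inr e) := by
        obtain ⟨w, hw⟩ := Sym2.mem_iff_exists.mp hv
        refine ⟨⟨(v, w), ?_⟩, ?_⟩
        · rw [← mem_edgeSet, ← hw]; exact e.2
        · simp [φ, Dart.edge, ← hw]
      rintro ⟨e, he⟩
      induction e using Sym2.ind with
      | h x y =>
        rcases x with v | e <;> rcases y with w | e'
        · exact he.elim
        · obtain ⟨d, hd⟩ := hinc he
          exact ⟨d, Subtype.ext hd⟩
        · obtain ⟨d, hd⟩ := hinc he
          exact ⟨d, Subtype.ext (hd.trans Sym2.eq_swap)⟩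
        · exact he.elim
  rw [← Nat.card_congr (Equiv.ofBijective φ hφ), Nat.card_eq_fintype_card,
    dart_card_eq_twice_card_edges, edgeFinset_card, Nat.card_eq_fintype_card]

lemma standardSubdivision_isHom_iff {β : Type*} (Γ : SimpleGraph β) (F : V ⊕ H.edgeSet → β) :
    (∀ ⦃x y⦄, (standardSubdivision H).Adj x y → Γ.Adj (F x) (F y)) ↔
      ∀ e : H.edgeSet, ∀ v ∈ (e : Sym2 V), Γ.Adj (F (.inl v)) (F (.inr e)) := by
  refine ⟨fun hF e v hv => hF (x := .inl v) (y := .inr e) hv, ?_⟩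
  rintro hF (v | e) (w | e') hadj
  · exact hadj.elim
  · exact hF _ _ hadj
  · exact (hF _ _ hadj).symm
  · exact hadj.elim

lemma card_hom_standardSubdivision [Fintype V] {β : Type*} [Fintype β] (Γ : SimpleGraph β) :
    Nat.card {F : V ⊕ H.edgeSet → β //
        ∀ ⦃x y⦄, (standardSubdivision H).Adj x y → Γ.Adj (F x) (F y)} =
      ∑ f : V → β, ∏ e : H.edgeSet, #{z | ∀ v ∈ (e : Sym2 V), Γ.Adj (f v) z} := by
  let equiv := (Equiv.subtypeEquivRight (standardSubdivision_isHom_iff Γ)).trans <|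
    ((Equiv.sumArrowEquivProdArrow _ _ _).subtypeEquiv fun _ => Iff.rfl).trans <|
    (Equiv.subtypeProdEquivSigmaSubtype fun (f : V → β) (g : H.edgeSet → β) =>
      ∀ e : H.edgeSet, ∀ v ∈ (e : Sym2 V), Γ.Adj (f v) (g e)).trans <|
    Equiv.sigmaCongrRight fun f =>
      Equiv.subtypePiEquivPi (p := fun (e : H.edgeSet) z => ∀ v ∈ (e : Sym2 V), Γ.Adj (f v) z)
  rw [Nat.card_congr equiv, Nat.card_eq_fintype_card, Fintype.card_sigma]
  simp only [Fintype.card_pi, Fintype.card_subtype]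

end SimpleGraph

section CayleyGraph

variable {G : Type*} [AddCommGroup G]

@[simp]
lemma cayley_adj {S : Finset G} {h0 : (0 : G) ∉ S} {hsymm : ∀ s ∈ S, -s ∈ S} {x y : G} :
    (cayley S h0 hsymm).Adj x y ↔ x - y ∈ S :=
  Iff.rfl

variable [Fintype G]

lemma card_common_adj_cayley (S : Finset G) (h0 : (0 : G) ∉ S) (hsymm : ∀ s ∈ S, -s ∈ S)
    (a b : G) :
    #{z | (cayley S h0 hsymm).Adj a z ∧ (cayley S h0 hsymm).Adj b z} =
      #{x ∈ S | x + (a - b) ∈ S} := by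
  refine card_nbij' (b - ·) (b - ·) ?_ ?_ (fun z _ => sub_sub_cancel b z)
    (fun x _ => sub_sub_cancel b x)
  · intro z hz
    simp only [mem_coe, mem_filter, mem_univ, true_and, cayley_adj] at hz ⊢
    rw [add_comm, sub_add_sub_cancel]
    exact hz.symm
  · intro x hx
    simp only [mem_coe, mem_filter, mem_univ, true_and, cayley_adj, sub_sub_cancel] at hx ⊢
    exact ⟨by convert hx.2 using 1; abel, hx.1⟩

lemma natCast_card_mul_card_filter_add_mem (S : Finset G) (c : G) :
    (Fintype.card G : ℂ) * #{x ∈ S | x + c ∈ S} =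
      ∑ ψ : AddChar G ℂ, (‖∑ x ∈ S, ψ x‖ : ℂ) ^ 2 * ψ c := by
  have hsq (ψ : AddChar G ℂ) :
      (‖∑ x ∈ S, ψ x‖ : ℂ) ^ 2 * ψ c = ∑ x ∈ S, ∑ y ∈ S, ψ (x + c - y) := by
    simp_rw [← Complex.mul_conj', map_sum, sum_mul_sum, sum_mul, sub_eq_add_neg,
      AddChar.map_add_eq_mul, AddChar.map_neg_eq_conj, mul_right_comm]
  simp_rw [hsq]
  rw [sum_comm]
  simp_rw [sum_comm (s := univ), AddChar.sum_apply_eq_ite, sub_eq_zero, sum_ite_eq, ← sum_filter,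
    sum_const, nsmul_eq_mul, mul_comm]

lemma norm_fourCoeff_indicator (S : Finset G) (χ : AddChar G ℂ) :
    ‖fourCoeff (fun x => if x ∈ S then (1 : ℂ) else 0) χ‖ =
      ‖∑ x ∈ S, χ x‖ / Fintype.card G := by
  rw [fourCoeff, norm_div, Complex.norm_natCast]
  simp only [ite_mul, one_mul, zero_mul, sum_ite_mem, univ_inter, ← map_sum, Complex.norm_conj]

end CayleyGraph

namespace SimpleGraph

variable {V G M : Type*} {H : SimpleGraph V} [AddCommGroup G] [CommMonoid M]

noncomputable def orientedEdgeChar [Fintype H.edgeSet] (o : H.edgeSet → H.Dart)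
    (w : H.edgeSet → AddChar G M) : AddChar (V → G) M :=
  ∏ e, (w e).compAddMonoidHom
    (Pi.evalAddMonoidHom (fun _ => G) (o e).fst - Pi.evalAddMonoidHom (fun _ => G) (o e).snd)

@[simp]
lemma orientedEdgeChar_apply [Fintype H.edgeSet] (o : H.edgeSet → H.Dart)
    (w : H.edgeSet → AddChar G M) (f : V → G) :
    orientedEdgeChar o w f = ∏ e, w e (f (o e).fst - f (o e).snd) := by
  simp [orientedEdgeChar, AddChar.prod_apply]

lemma orientedEdgeChar_closedWalk_eq_one [Fintype H.edgeSet] {u : V} (c : H.Walk u u)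
    (hc : c.edges.Nodup) (o : H.edgeSet → H.Dart)
    (hoc : ∀ d ∈ c.darts, o ⟨d.edge, d.edge_mem⟩ = d) (χ : AddChar G M) :
    orientedEdgeChar o (fun e => if (e : Sym2 V) ∈ c.edges then χ else 1) = 1 := by
  ext f
  have hdarts : c.darts.Nodup := hc.of_map _
  calc orientedEdgeChar o (fun e => if (e : Sym2 V) ∈ c.edges then χ else 1) f
      = ∏ e ∈ univ.filter fun e : H.edgeSet => (e : Sym2 V) ∈ c.edges,
          χ (f (o e).fst - f (o e).snd) := by
        simp [prod_filter, apply_ite, ite_apply]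
    _ = ∏ d ∈ c.darts.toFinset, χ (f d.fst - f d.snd) := by
        refine (prod_bij (fun d _ => ⟨d.edge, d.edge_mem⟩) ?_ ?_ ?_ ?_).symm
        · intro d hd
          exact mem_filter.mpr ⟨mem_univ _, List.mem_map_of_mem (List.mem_toFinset.mp hd)⟩
        · intro d hd d' hd' h
          rw [← hoc d (List.mem_toFinset.mp hd), ← hoc d' (List.mem_toFinset.mp hd')]
          exact congrArg o h
        · rintro ⟨e, he⟩ hec
          obtain ⟨d, hd, rfl⟩ := List.mem_map.mp (mem_filter.mp hec).2
          exact ⟨d, List.mem_toFinset.mpr hd, rfl⟩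
        · intro d hd
          rw [hoc d (List.mem_toFinset.mp hd)]
    _ = 1 := by
        rw [List.prod_toFinset _ hdarts, c.prod_darts_map_addChar, sub_self,
          AddChar.map_zero_eq_one]

variable [Fintype V] [Fintype G]

lemma card_hom_standardSubdivision_cayley (o : H.edgeSet → H.Dart) (ho : ∀ e, (o e).edge = e)
    (S : Finset G) (h0 : (0 : G) ∉ S) (hsymm : ∀ s ∈ S, -s ∈ S) :
    Nat.card {F : V ⊕ H.edgeSet → G //
        ∀ ⦃x y⦄, (standardSubdivision H).Adj x y → (cayley S h0 hsymm).Adj (F x) (F y)} =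
      ∑ f : V → G, ∏ e : H.edgeSet, #{x ∈ S | x + (f (o e).fst - f (o e).snd) ∈ S} := by
  rw [card_hom_standardSubdivision]
  refine sum_congr rfl fun f _ => prod_congr rfl fun e _ => ?_
  rw [← card_common_adj_cayley S h0 hsymm, ← ho e]
  simp only [Dart.edge, Sym2.forall_mem_pair]

lemma card_hom_standardSubdivision_cayley_mul_pow (o : H.edgeSet → H.Dart)
    (ho : ∀ e, (o e).edge = e) (S : Finset G) (h0 : (0 : G) ∉ S) (hsymm : ∀ s ∈ S, -s ∈ S) :
    (Nat.card {F : V ⊕ H.edgeSet → G //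
        ∀ ⦃x y⦄, (standardSubdivision H).Adj x y → (cayley S h0 hsymm).Adj (F x) (F y)} : ℂ) *
        (Fintype.card G : ℂ) ^ Fintype.card H.edgeSet =
      ∑ w : H.edgeSet → AddChar G ℂ,
        (∏ e, (‖∑ x ∈ S, w e x‖ : ℂ) ^ 2) * ∑ f, orientedEdgeChar o w f := by
  rw [card_hom_standardSubdivision_cayley o ho, Nat.cast_sum, sum_mul]
  simp_rw [Nat.cast_prod, ← card_univ (α := H.edgeSet), ← prod_const, ← prod_mul_distrib,
    mul_comm _ (Fintype.card G : ℂ), natCast_card_mul_card_filter_add_mem, Fintype.prod_sum]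
  rw [sum_comm]
  simp_rw [prod_mul_distrib, mul_sum, orientedEdgeChar_apply]

lemma homDensity_standardSubdivision_cayley (o : H.edgeSet → H.Dart)
    (ho : ∀ e, (o e).edge = e) (S : Finset G) (h0 : (0 : G) ∉ S) (hsymm : ∀ s ∈ S, -s ∈ S) :
    homDensity (standardSubdivision H) (cayley S h0 hsymm) =
      ∑ w : H.edgeSet → AddChar G ℂ, if orientedEdgeChar o w = 1 then
        ∏ e, ‖fourCoeff (fun x => if x ∈ S then (1 : ℂ) else 0) (w e)‖ ^ 2 else 0 := by
  have key := card_hom_standardSubdivision_cayley_mul_pow o ho S h0 hsymm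
  simp_rw [AddChar.sum_eq_ite, ← AddChar.one_eq_zero, Fintype.card_fun, Nat.cast_pow, mul_ite,
    mul_zero] at key
  have key' : (Nat.card {F : V ⊕ H.edgeSet → G //
        ∀ ⦃x y⦄, (standardSubdivision H).Adj x y → (cayley S h0 hsymm).Adj (F x) (F y)} : ℝ) *
        (Fintype.card G : ℝ) ^ Fintype.card H.edgeSet =
      ∑ w : H.edgeSet → AddChar G ℂ, if orientedEdgeChar o w = 1 then
        (∏ e, ‖∑ x ∈ S, w e x‖ ^ 2) * (Fintype.card G : ℝ) ^ Fintype.card V else 0 := by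
    apply Complex.ofReal_injective
    push_cast [apply_ite]
    exact key
  have hn : (Fintype.card G : ℝ) ≠ 0 := by positivity
  rw [homDensity, Nat.card_sum, Nat.card_eq_fintype_card (α := G),
    Nat.card_eq_fintype_card (α := V), Nat.card_eq_fintype_card (α := H.edgeSet),
    ← mul_div_mul_right _ _ (pow_ne_zero (Fintype.card H.edgeSet) hn), key', sum_div]
  refine sum_congr rfl fun w _ => ?_
  split_ifs
  · simp_rw [norm_fourCoeff_indicator, div_pow, prod_div_distrib, prod_const, card_univ]
    field_simp
    ring
  · simp

lemma homDensity_standardSubdivision_cayley_ge (hH : ¬ H.IsAcyclic) (S : Finset G)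
    (h0 : (0 : G) ∉ S) (hsymm : ∀ s ∈ S, -s ∈ S) {χ : AddChar G ℂ} (hχ : χ ≠ 1) {r : ℝ}
    (hr0 : 0 ≤ r) (hr1 : r ≤ ‖fourCoeff (fun x => if x ∈ S then (1 : ℂ) else 0) 1‖)
    (hrχ : r ≤ ‖fourCoeff (fun x => if x ∈ S then (1 : ℂ) else 0) χ‖) :
    ‖fourCoeff (fun x => if x ∈ S then (1 : ℂ) else 0) 1‖ ^ (2 * Fintype.card H.edgeSet) +
        r ^ (2 * Fintype.card H.edgeSet) ≤
      homDensity (standardSubdivision H) (cayley S h0 hsymm) := by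
  obtain ⟨u, c, hc⟩ : ∃ u, ∃ c : H.Walk u u, c.IsCycle := by simpa [IsAcyclic] using hH
  obtain ⟨o, ho, hoc⟩ := c.exists_orientation_of_edges_nodup hc.edges_nodup
  let t : (H.edgeSet → AddChar G ℂ) → ℝ := fun w => if orientedEdgeChar o w = 1 then
    ∏ e, ‖fourCoeff (fun x => if x ∈ S then (1 : ℂ) else 0) (w e)‖ ^ 2 else 0
  have ht_nonneg (w) : 0 ≤ t w := ite_nonneg (prod_nonneg fun _ _ => sq_nonneg _) le_rfl
  have le_t {w : H.edgeSet → AddChar G ℂ} {s : ℝ} (hs : 0 ≤ s)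
      (hw : ∀ e, s ≤ ‖fourCoeff (fun x => if x ∈ S then (1 : ℂ) else 0) (w e)‖)
      (hclosed : orientedEdgeChar o w = 1) : s ^ (2 * Fintype.card H.edgeSet) ≤ t w := by
    rw [pow_mul, ← card_univ, ← prod_const]
    simp only [t, if_pos hclosed]
    gcongr with e
    exact hw e
  let w₀ : H.edgeSet → AddChar G ℂ := fun e => if (e : Sym2 V) ∈ c.edges then χ else 1
  have hw₀ : 1 ≠ w₀ := by
    obtain ⟨e, he⟩ := List.exists_mem_of_ne_nil _ (Walk.edges_eq_nil.not.mpr hc.not_nil)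
    intro h
    have := congrFun h ⟨e, c.edges_subset_edgeSet he⟩
    simp only [Pi.one_apply, he, if_true, w₀] at this
    exact hχ this.symm
  rw [homDensity_standardSubdivision_cayley o ho]
  calc _ ≤ t 1 + t w₀ := by
        refine add_le_add (le_t (norm_nonneg _) (fun _ => le_rfl) (by ext; simp)) (le_t hr0 ?_
          (orientedEdgeChar_closedWalk_eq_one c hc.edges_nodup o hoc χ))
        intro e
        by_cases he : (e : Sym2 V) ∈ c.edges <;> simp [w₀, he, hr1, hrχ]
    _ ≤ ∑ w, t w := add_le_sum (fun w _ => ht_nonneg w) (mem_univ _) (mem_univ _) hw₀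

end SimpleGraph

open scoped Classical in
theorem sidorenko_strict_of_large_fourier_coeff_general
    {G V₁ : Type*} [AddCommGroup G] [Fintype G] [Fintype V₁]
    (S : Finset G) (h0 : (0 : G) ∉ S) (hsymm : ∀ s ∈ S, -s ∈ S)
    (H₁ : SimpleGraph V₁) (hconn : H₁.Connected)
    (hcyc : Fintype.card V₁ ≤ Nat.card H₁.edgeSet)
    (ε : ℝ) (hε0 : 0 < ε) (hε1 : ε ≤ 1)
    (χ : AddChar G ℂ) (hχ : χ ≠ 1)
    (hlarge : ε * ((S.card : ℝ) / (Fintype.card G : ℝ)) ≤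
      ‖fourCoeff (fun x => if x ∈ S then (1 : ℂ) else 0) χ‖) :
    homDensity (standardSubdivision H₁) (cayley S h0 hsymm) ≥
      ((S.card : ℝ) / (Fintype.card G : ℝ)) ^ (Nat.card (standardSubdivision H₁).edgeSet) *
        (1 + ε ^ (Nat.card (standardSubdivision H₁).edgeSet)) := by
  have hS1 : ‖fourCoeff (fun x => if x ∈ S then (1 : ℂ) else 0) 1‖ =
      S.card / Fintype.card G := by
    simp [norm_fourCoeff_indicator]
  have hcycle : ¬ H₁.IsAcyclic :=
    hconn.not_isAcyclic_of_card_le (by rwa [Nat.card_eq_fintype_card])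
  have key := SimpleGraph.homDensity_standardSubdivision_cayley_ge hcycle S h0 hsymm hχ
    (by positivity) (hS1 ▸ mul_le_of_le_one_left (by positivity) hε1) hlarge
  rw [hS1] at key
  rw [SimpleGraph.card_edgeSet_standardSubdivision, Nat.card_eq_fintype_card, ge_iff_le]
  convert key using 1
  rw [mul_pow]
  ring

open scoped Classical in
/-- If `f = 1_S` has a nontrivial Fourier coefficient of size at least `ε·f̂(0)`, then for
the standard subdivision `H` of a connected graph `H₁` containing a cycle, the Sidorenko
inequality in `Cay(G,S)` is strict: `t(H) ≥ t(K₂)^{e(H)} · (1 + ε^{e(H)})`. -/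
theorem sidorenko_strict_of_large_fourier_coeff
    {G V₁ : Type*} [AddCommGroup G] [Fintype G] [Fintype V₁]
    (S : Finset G) (h0 : (0 : G) ∉ S) (hsymm : ∀ s ∈ S, -s ∈ S) (hSne : S.Nonempty)
    (H₁ : SimpleGraph V₁) (hconn : H₁.Connected)
    (hcyc : Fintype.card V₁ ≤ Nat.card H₁.edgeSet)
    (ε : ℝ) (hε0 : 0 < ε) (hε1 : ε ≤ 1)
    (χ : AddChar G ℂ) (hχ : χ ≠ 1)
    (hlarge : ε * ((S.card : ℝ) / (Fintype.card G : ℝ)) ≤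
      ‖fourCoeff (fun x => if x ∈ S then (1 : ℂ) else 0) χ‖) :
    homDensity (standardSubdivision H₁) (cayley S h0 hsymm) ≥
      ((S.card : ℝ) / (Fintype.card G : ℝ)) ^ (Nat.card (standardSubdivision H₁).edgeSet) *
        (1 + ε ^ (Nat.card (standardSubdivision H₁).edgeSet)) :=
  sidorenko_strict_of_large_fourier_coeff_general S h0 hsymm H₁ hconn hcyc ε hε0 hε1 χ hχ hlarge
end
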